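/- Let A be an n×n complex matrix, regarded as a linear endomorphism of ℂⁿ. Then for x ∈ ℂⁿ, exp(tA) x → 0 as t → −∞ if and only if x belongs to the sum of the maximal generalized eigenspaces ⨆_{λ : Re λ > 0} ker((A − λI)ⁿ) of A over eigenvalues λ with positive real part. That is, the unstable subspace E^u, defined dynamically as the set of initial conditions whose trajectories under ẋ = Ax converge to the origin as t → −∞, equals the span of the generalized eigenvectors of A corresponding to eigenvalues with positive real part. -/

import Mathlib

/-!
On a generalized eigenvector `v` of `A` for `μ`, with `(A - μ)ᵏ v = 0`,
`exp (tA) v = e^{tμ} ∑_{j<k} tʲ/j! (A - μ)ʲ v`, which tends to `0` as `t → -∞` when `re μ > 0`.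
Conversely, the vectors whose backward orbit tends to `0` form a subspace invariant under every
matrix commuting with `A`, hence the sum of its intersections with the generalized eigenspaces.
For `re μ ≤ 0` such an intersection is trivial, by induction on `k`: `(A - μ) v` lies in it
and is killed by `(A - μ)ᵏ⁻¹`, so it vanishes, and then `v` is an eigenvector with
`‖exp (tA) v‖ = e^{t re μ} ‖v‖ ≥ ‖v‖` for `t ≤ 0`.
-/

open Filter Topology NormedSpace Module
open scoped Matrix Nat

theorem Complex.tendsto_exp_mul_mul_pow_atBot {μ : ℂ} (hμ : 0 < μ.re) (j : ℕ) :
    Tendsto (fun t : ℝ ↦ Complex.exp (t * μ) * (t : ℂ) ^ j) atBot (𝓝 0) := by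
  rw [tendsto_zero_iff_norm_tendsto_zero]
  refine ((tendsto_rpow_mul_exp_neg_mul_atTop_nhds_zero j μ.re hμ).comp
    tendsto_neg_atBot_atTop).congr' ?_
  filter_upwards [eventually_le_atBot 0] with t ht
  simp [Complex.norm_exp, abs_of_nonpos ht, mul_comm]

namespace Matrix

variable {ι : Type*} [Fintype ι] [DecidableEq ι]

section Field

variable {K : Type*} [Field K]

theorem toLin'_pow_sub_smul_one (A : Matrix ι ι K) (μ : K) (k : ℕ) :
    toLin' ((A - μ • 1) ^ k) = (toLin' A - μ • 1) ^ k := by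
  have h := map_pow (toLinAlgEquiv' (R := K) (n := ι)) (A - μ • 1) k
  rwa [map_sub, map_smul, map_one] at h

theorem mem_maxGenEigenspace_toLin' {A : Matrix ι ι K} {μ : K} {v : ι → K} :
    v ∈ End.maxGenEigenspace (toLin' A) μ ↔ ∃ k : ℕ, (A - μ • 1) ^ k *ᵥ v = 0 := by
  simp only [End.mem_maxGenEigenspace, ← toLin'_pow_sub_smul_one, toLin'_apply]

theorem ker_toLin'_pow_sub_smul_one_card (A : Matrix ι ι K) (μ : K) :
    LinearMap.ker (toLin' ((A - μ • 1) ^ Fintype.card ι)) =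
      End.maxGenEigenspace (toLin' A) μ := by
  rw [End.maxGenEigenspace_eq_genEigenspace_finrank, finrank_fintype_fun_eq_card,
    End.genEigenspace_nat, toLin'_pow_sub_smul_one]

end Field

theorem exp_mulVec_eq_sum_of_pow_mulVec_eq_zero {𝕂 : Type*} [RCLike 𝕂] (N : Matrix ι ι 𝕂)
    {v : ι → 𝕂} {k : ℕ} (hv : N ^ k *ᵥ v = 0) :
    exp N *ᵥ v = ∑ j ∈ Finset.range k, (j ! : 𝕂)⁻¹ • (N ^ j *ᵥ v) := by
  have hseries : HasSum (fun j ↦ (j ! : 𝕂)⁻¹ • (N ^ j *ᵥ v)) (exp N *ᵥ v) := by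
    open scoped Norms.Operator in
    convert (exp_series_hasSum_exp' (𝕂 := 𝕂) N).map (mulVec.addMonoidHomLeft v)
      (continuous_id.matrix_mulVec continuous_const) using 1
    · ext1 j
      simp [mulVec.addMonoidHomLeft, smul_mulVec]
    -- `exp` taken with the operator-norm topology on matrices is the product-topology `exp`
    · rfl
  refine hseries.unique (hasSum_sum_of_ne_finset_zero fun j hj ↦ ?_)
  rw [Finset.mem_range, not_lt] at hj
  rw [← Nat.sub_add_cancel hj, pow_add, ← mulVec_mulVec, hv, mulVec_zero, smul_zero]

theorem exp_eq_cexp_smul_exp_sub_smul_one (A : Matrix ι ι ℂ) (μ : ℂ) :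
    exp A = Complex.exp μ • exp (A - μ • 1) := by
  have hsplit : A = algebraMap ℂ (Matrix ι ι ℂ) μ + (A - μ • 1) := by
    rw [Algebra.algebraMap_eq_smul_one, add_sub_cancel]
  have hscalar :
      exp (algebraMap ℂ (Matrix ι ι ℂ) μ) = algebraMap ℂ (Matrix ι ι ℂ) (Complex.exp μ) := by
    open scoped Norms.Operator in
    rw [Complex.exp_eq_exp_ℂ]
    exact (algebraMap_exp_comm μ).symm
  conv_lhs => rw [hsplit]
  rw [exp_add_of_commute _ _ (Algebra.commute_algebraMap_left _ _), hscalar, ← Algebra.smul_def]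

theorem exp_smul_mulVec_of_pow_sub_mulVec_eq_zero (A : Matrix ι ι ℂ) {μ : ℂ} {v : ι → ℂ}
    {k : ℕ} (hv : (A - μ • 1) ^ k *ᵥ v = 0) (z : ℂ) :
    exp (z • A) *ᵥ v =
      Complex.exp (z * μ) •
        ∑ j ∈ Finset.range k, (z ^ j / j !) • ((A - μ • 1) ^ j *ᵥ v) := by
  have hshift : z • A - (z * μ) • 1 = z • (A - μ • 1) := by rw [smul_sub, smul_smul]
  have hzv : (z • (A - μ • 1)) ^ k *ᵥ v = 0 := by rw [smul_pow, smul_mulVec, hv, smul_zero]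
  rw [exp_eq_cexp_smul_exp_sub_smul_one _ (z * μ), hshift, smul_mulVec,
    exp_mulVec_eq_sum_of_pow_mulVec_eq_zero _ hzv]
  congr 1
  refine Finset.sum_congr rfl fun j _ ↦ ?_
  rw [smul_pow, smul_mulVec, smul_smul, div_eq_inv_mul]

theorem exp_smul_mulVec_of_mulVec_eq_smul (A : Matrix ι ι ℂ) {μ : ℂ} {v : ι → ℂ}
    (hv : A *ᵥ v = μ • v) (z : ℂ) :
    exp (z • A) *ᵥ v = Complex.exp (z * μ) • v := by
  simpa using exp_smul_mulVec_of_pow_sub_mulVec_eq_zero A (k := 1)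
    (by rw [pow_one, sub_mulVec, hv, smul_mulVec, one_mulVec, sub_self]) z

theorem tendsto_exp_smul_mulVec_atBot_of_pow_sub_mulVec_eq_zero (A : Matrix ι ι ℂ) {μ : ℂ}
    (hμ : 0 < μ.re) {v : ι → ℂ} {k : ℕ} (hv : (A - μ • 1) ^ k *ᵥ v = 0) :
    Tendsto (fun t : ℝ ↦ exp ((t : ℂ) • A) *ᵥ v) atBot (𝓝 0) := by
  simp_rw [exp_smul_mulVec_of_pow_sub_mulVec_eq_zero A hv, Finset.smul_sum, smul_smul]
  have hterm (j : ℕ) : Tendsto (fun t : ℝ ↦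
      (Complex.exp (t * μ) * ((t : ℂ) ^ j / j !)) • ((A - μ • 1) ^ j *ᵥ v)) atBot (𝓝 0) := by
    simpa [mul_div_assoc] using
      ((Complex.tendsto_exp_mul_mul_pow_atBot hμ j).div_const (j ! : ℂ)).smul_const
        ((A - μ • 1) ^ j *ᵥ v)
  simpa using tendsto_finsetSum (Finset.range k) fun j _ ↦ hterm j

theorem eq_zero_of_mulVec_eq_smul_of_tendsto_atBot (A : Matrix ι ι ℂ) {μ : ℂ}
    (hμ : μ.re ≤ 0) {v : ι → ℂ} (hv : A *ᵥ v = μ • v)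
    (h : Tendsto (fun t : ℝ ↦ exp ((t : ℂ) • A) *ᵥ v) atBot (𝓝 0)) : v = 0 := by
  have hgrowth : ∀ᶠ t : ℝ in atBot, ‖v‖ ≤ ‖exp ((t : ℂ) • A) *ᵥ v‖ := by
    filter_upwards [eventually_le_atBot 0] with t ht
    rw [exp_smul_mulVec_of_mulVec_eq_smul A hv, norm_smul, Complex.norm_exp]
    refine le_mul_of_one_le_left (norm_nonneg v) (Real.one_le_exp ?_)
    simpa using mul_nonneg_of_nonpos_of_nonpos ht hμ
  have := ge_of_tendsto h.norm hgrowth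
  rwa [norm_zero, norm_le_zero_iff] at this

def unstableSubspace (A : Matrix ι ι ℂ) : Submodule ℂ (ι → ℂ) where
  carrier := {x | Tendsto (fun t : ℝ ↦ exp ((t : ℂ) • A) *ᵥ x) atBot (𝓝 0)}
  add_mem' hx hy := by simpa [mulVec_add] using hx.add hy
  zero_mem' := by simp
  smul_mem' c x hx := by simpa [mulVec_smul] using hx.const_smul c

theorem mem_unstableSubspace {A : Matrix ι ι ℂ} {x : ι → ℂ} :
    x ∈ unstableSubspace A ↔ Tendsto (fun t : ℝ ↦ exp ((t : ℂ) • A) *ᵥ x) atBot (𝓝 0) :=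
  Iff.rfl

theorem mulVec_mem_unstableSubspace {A B : Matrix ι ι ℂ} (hAB : Commute A B) {x : ι → ℂ}
    (hx : x ∈ unstableSubspace A) : B *ᵥ x ∈ unstableSubspace A := by
  have hflow (t : ℝ) :
      exp ((t : ℂ) • A) *ᵥ (B *ᵥ x) = B *ᵥ (exp ((t : ℂ) • A) *ᵥ x) := by
    rw [mulVec_mulVec, mulVec_mulVec, ((hAB.smul_left (t : ℂ)).exp_left).eq]
  simpa only [mem_unstableSubspace, hflow, Function.comp_def, mulVecLin_apply] using
    ((mulVecLin B).continuous_of_finiteDimensional.tendsto' 0 0 (mulVec_zero B)).comp hx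

theorem eq_zero_of_mem_unstableSubspace_of_pow_sub_mulVec_eq_zero {A : Matrix ι ι ℂ} {μ : ℂ}
    (hμ : μ.re ≤ 0) {k : ℕ} :
    ∀ {v : ι → ℂ}, v ∈ unstableSubspace A → (A - μ • 1) ^ k *ᵥ v = 0 → v = 0 := by
  induction k with
  | zero => simp
  | succ k ih =>
    intro v hvS hv
    have hcomm : Commute A (A - μ • 1) :=
      (Commute.refl A).sub_right ((Commute.one_right A).smul_right μ)
    have hNv : (A - μ • 1) *ᵥ v = 0 :=
      ih (mulVec_mem_unstableSubspace hcomm hvS) (by rwa [mulVec_mulVec, ← pow_succ])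
    rw [sub_mulVec, sub_eq_zero, smul_mulVec, one_mulVec] at hNv
    exact eq_zero_of_mulVec_eq_smul_of_tendsto_atBot A hμ hNv hvS

theorem maxGenEigenspace_toLin'_le_unstableSubspace (A : Matrix ι ι ℂ) {μ : ℂ}
    (hμ : 0 < μ.re) : End.maxGenEigenspace (toLin' A) μ ≤ unstableSubspace A := fun _ hv ↦
  let ⟨_, hk⟩ := mem_maxGenEigenspace_toLin'.mp hv
  tendsto_exp_smul_mulVec_atBot_of_pow_sub_mulVec_eq_zero A hμ hk

theorem unstableSubspace_inf_maxGenEigenspace_toLin'_eq_bot (A : Matrix ι ι ℂ) {μ : ℂ}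
    (hμ : μ.re ≤ 0) : unstableSubspace A ⊓ End.maxGenEigenspace (toLin' A) μ = ⊥ := by
  refine eq_bot_iff.mpr fun v ⟨hvS, hvE⟩ ↦ ?_
  obtain ⟨k, hk⟩ := mem_maxGenEigenspace_toLin'.mp hvE
  exact eq_zero_of_mem_unstableSubspace_of_pow_sub_mulVec_eq_zero hμ hvS hk

theorem unstableSubspace_eq_iSup_maxGenEigenspace (A : Matrix ι ι ℂ) :
    unstableSubspace A = ⨆ μ : {μ : ℂ // 0 < μ.re}, End.maxGenEigenspace (toLin' A) μ := by
  refine le_antisymm ?_ (iSup_le fun μ ↦ maxGenEigenspace_toLin'_le_unstableSubspace A μ.2)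
  have hinv : ∀ x ∈ unstableSubspace A, toLin' A x ∈ unstableSubspace A :=
    fun _ hx ↦ mulVec_mem_unstableSubspace (Commute.refl A) hx
  rw [Submodule.eq_iSup_inf_genEigenspace ⊤ hinv (End.iSup_maxGenEigenspace_eq_top _)]
  refine iSup_le fun μ ↦ ?_
  rcases lt_or_ge 0 μ.re with hμ | hμ
  · exact inf_le_right.trans (le_iSup_of_le (⟨μ, hμ⟩ : {μ : ℂ // 0 < μ.re}) le_rfl)
  · rw [unstableSubspace_inf_maxGenEigenspace_toLin'_eq_bot A hμ]
    exact bot_le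

end Matrix

/-- Dynamical characterization of the unstable subspace of `ẋ = Ax`:
`exp(tA)x → 0` as `t → −∞` iff `x` lies in the sum of the maximal generalized
eigenspaces of `A` over eigenvalues with positive real part. -/
theorem unstable_subspace_eq_sum_generalized_eigenspaces {n : ℕ}
    (A : Matrix (Fin n) (Fin n) ℂ) (x : Fin n → ℂ) :
    Filter.Tendsto (fun t : ℝ => (NormedSpace.exp ((t : ℂ) • A)).mulVec x)
        Filter.atBot (nhds 0)
      ↔ x ∈ ⨆ lam : {μ : ℂ // 0 < μ.re},
          LinearMap.ker (Matrix.toLin' ((A - (lam : ℂ) • 1) ^ n)) := by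
  have hker (μ : ℂ) : LinearMap.ker (Matrix.toLin' ((A - μ • 1) ^ n)) =
      End.maxGenEigenspace (Matrix.toLin' A) μ := by
    simpa using Matrix.ker_toLin'_pow_sub_smul_one_card A μ
  simp_rw [hker, ← Matrix.unstableSubspace_eq_iSup_maxGenEigenspace]
  exact Matrix.mem_unstableSubspace.symm
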